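/- arXiv:2104.08759 — 3 statements merged into one kernel-verified Lean document; each statement's English description precedes it below -/
import Mathlib

section
/- Let T : ℕ → ℕ → ℕ be the CBS recurrence defined by T(r,s) = 1 whenever r = 0 or s = 0, T(1,s) = 3 for all s ≥ 1, and T(r,s) = T(r−1,s) + T(r−2,s−1) + 1 for all r ≥ 2 and s ≥ 1. Then for all natural numbers r ≥ 1 and s ≥ 1 one has T(r,s) ≤ 3 · r^s. -/
/-!
Strong induction on `r`. For `r = m + 2` and `s = t + 1` the recurrence adds `T (m + 1) (t + 1)`,
bounded by `3 (m + 1)^(t + 1)`, and `T m t + 1`, which is at most `3 (m + 1)^t` because the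
induction hypothesis (or the boundary value `1`) gives `T m t < 3 (m + 1)^t`. Since
`a^(t + 1) + a^t ≤ (a + 1)^(t + 1)`, the two terms together stay below `3 (m + 2)^(t + 1)`.
-/

theorem Nat.pow_succ_add_pow_le_succ_pow (a t : ℕ) : a ^ (t + 1) + a ^ t ≤ (a + 1) ^ (t + 1) :=
  calc a ^ (t + 1) + a ^ t = (a + 1) * a ^ t := by ring
    _ ≤ (a + 1) * (a + 1) ^ t := by gcongr; omega
    _ = (a + 1) ^ (t + 1) := by ring

theorem lt_three_mul_succ_pow_of_boundary {T : ℕ → ℕ → ℕ}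
    (h0 : ∀ r s : ℕ, r = 0 ∨ s = 0 → T r s = 1) {m t : ℕ}
    (hmt : 1 ≤ m → 1 ≤ t → T m t ≤ 3 * m ^ t) : T m t < 3 * (m + 1) ^ t := by
  by_cases hb : m = 0 ∨ t = 0
  · rw [h0 m t hb]
    have := Nat.one_le_pow t (m + 1) m.succ_pos
    omega
  · have hpow : m ^ t < (m + 1) ^ t := Nat.pow_lt_pow_left m.lt_succ_self (by omega)
    have := hmt (by omega) (by omega)
    omega

/-- For the CBS recurrence `T`, `T r s ≤ 3 * r ^ s` for all `r, s ≥ 1`. -/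
theorem cbs_recurrence_le (T : ℕ → ℕ → ℕ)
    (h0 : ∀ r s : ℕ, r = 0 ∨ s = 0 → T r s = 1)
    (h1 : ∀ s : ℕ, 1 ≤ s → T 1 s = 3)
    (h2 : ∀ r s : ℕ, 2 ≤ r → 1 ≤ s → T r s = T (r - 1) s + T (r - 2) (s - 1) + 1) :
    ∀ r s : ℕ, 1 ≤ r → 1 ≤ s → T r s ≤ 3 * r ^ s := by
  intro r
  induction r using Nat.strong_induction_on with
  | _ r ih =>
    rintro s hr hs
    obtain ⟨t, rfl⟩ := Nat.exists_eq_add_of_le' hs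
    match r, hr with
    | 1, _ => simp [h1 (t + 1) hs]
    | m + 2, _ =>
      have hprev : T (m + 1) (t + 1) ≤ 3 * (m + 1) ^ (t + 1) :=
        ih (m + 1) (by omega) _ (by omega) hs
      have hdiag : T m t < 3 * (m + 1) ^ t :=
        lt_three_mul_succ_pow_of_boundary h0 (ih m (by omega) t)
      have hgrowth : (m + 1) ^ (t + 1) + (m + 1) ^ t ≤ (m + 2) ^ (t + 1) :=
        Nat.pow_succ_add_pow_le_succ_pow (m + 1) t
      calc T (m + 2) (t + 1) = T (m + 1) (t + 1) + T m t + 1 := h2 _ _ (by omega) hs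
        _ ≤ 3 * (m + 1) ^ (t + 1) + 3 * (m + 1) ^ t := by omega
        _ ≤ 3 * (m + 2) ^ (t + 1) := by omega
end

section
/- Let T : ℕ → ℕ → ℕ be the CBS recurrence defined by T(r,s) = 1 whenever r = 0 or s = 0, T(1,s) = 3 for all s ≥ 1, and T(r,s) = T(r−1,s) + T(r−2,s−1) + 1 for all r ≥ 2 and s ≥ 1. Let F be the formal power series in two commuting variables X and Y over ℤ whose coefficient of X^r·Y^s equals T(r,s) for all r, s ≥ 0. Then (1 − X)·(1 − Y)·(1 − X − X²·Y) · F = 1 − X + 2·X·Y − X²·Y, as an identity of formal power series in ℤ⟦X,Y⟧. -/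
/-!
Multiplying `F` by `1 - X - X²Y` leaves, by the recurrence, a series whose coefficients are `1`
for `r ≥ 2, s ≥ 1` and are read off the boundary values of `T` elsewhere. That series is
`1/(1-Y) + XY/(1-Y) + XY/((1-X)(1-Y))`, and multiplying it by `(1-X)(1-Y)` gives the polynomial
`1 - X + 2XY - X²Y`.
-/

open MvPowerSeries

namespace MvPowerSeries

variable {R : Type*} [Semiring R]

noncomputable def coeff₂ (r s : ℕ) : MvPowerSeries (Fin 2) R →ₗ[R] R :=
  coeff (Finsupp.single 0 r + Finsupp.single 1 s)

theorem ext₂ {φ ψ : MvPowerSeries (Fin 2) R} (h : ∀ r s, coeff₂ r s φ = coeff₂ r s ψ) :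
    φ = ψ := by
  ext d
  have hd : d = Finsupp.single 0 (d 0) + Finsupp.single 1 (d 1) := by
    ext i; fin_cases i <;> simp
  rw [hd]
  exact h _ _

theorem coeff₂_one (r s : ℕ) :
    coeff₂ r s (1 : MvPowerSeries (Fin 2) R) = if r = 0 ∧ s = 0 then 1 else 0 := by
  simp [coeff₂, coeff_one, Finsupp.ext_iff, Fin.forall_fin_two]

theorem coeff₂_X_zero_mul_succ (r s : ℕ) (φ : MvPowerSeries (Fin 2) R) :
    coeff₂ (r + 1) s (X 0 * φ) = coeff₂ r s φ := by
  rw [coeff₂, coeff₂, X_def, Finsupp.single_add, add_right_comm, add_comm, coeff_add_monomial_mul,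
    one_mul]

theorem coeff₂_X_one_mul_succ (r s : ℕ) (φ : MvPowerSeries (Fin 2) R) :
    coeff₂ r (s + 1) (X 1 * φ) = coeff₂ r s φ := by
  rw [coeff₂, coeff₂, X_def, Finsupp.single_add, ← add_assoc, add_comm, coeff_add_monomial_mul,
    one_mul]

theorem coeff₂_zero_X_zero_mul (s : ℕ) (φ : MvPowerSeries (Fin 2) R) :
    coeff₂ 0 s (X 0 * φ) = 0 := by
  rw [coeff₂, X_def, coeff_monomial_mul, if_neg]
  simp [Finsupp.le_def, Fin.forall_fin_two]

theorem coeff₂_X_one_mul_zero (r : ℕ) (φ : MvPowerSeries (Fin 2) R) :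
    coeff₂ r 0 (X 1 * φ) = 0 := by
  rw [coeff₂, X_def, coeff_monomial_mul, if_neg]
  simp [Finsupp.le_def, Fin.forall_fin_two]

end MvPowerSeries

def cbsResidual (r s : ℕ) : ℤ :=
  if r = 0 then 1 else if s = 0 then 0 else if r = 1 then 2 else 1

theorem coeff₂_cbs_mul (T : ℕ → ℕ → ℕ)
    (h0 : ∀ r s : ℕ, r = 0 ∨ s = 0 → T r s = 1)
    (h1 : ∀ s : ℕ, 1 ≤ s → T 1 s = 3)
    (h2 : ∀ r s : ℕ, 2 ≤ r → 1 ≤ s → T r s = T (r - 1) s + T (r - 2) (s - 1) + 1)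
    (F : MvPowerSeries (Fin 2) ℤ) (hF : ∀ r s, coeff₂ r s F = T r s) (r s : ℕ) :
    coeff₂ r s ((1 - X 0 - X 0 ^ 2 * X 1) * F) = cbsResidual r s := by
  have hG : (1 - X 0 - X 0 ^ 2 * X 1) * F = F - X 0 * F - X 0 * (X 0 * (X 1 * F)) := by ring
  rw [hG]
  rcases r with _ | _ | r
  · simp [coeff₂_zero_X_zero_mul, hF, cbsResidual, h0 0 s (.inl rfl)]
  · rcases s with _ | s
    · simp [coeff₂_X_zero_mul_succ, coeff₂_zero_X_zero_mul, hF, cbsResidual,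
        h0 1 0 (.inr rfl), h0 0 0 (.inl rfl)]
    · simp [coeff₂_X_zero_mul_succ, coeff₂_zero_X_zero_mul, hF, cbsResidual,
        h1 (s + 1) s.succ_pos, h0 0 (s + 1) (.inl rfl)]
  · simp only [map_sub, coeff₂_X_zero_mul_succ, hF]
    rcases s with _ | s
    · simp [coeff₂_X_one_mul_zero, cbsResidual, h0 _ 0 (.inr rfl)]
    · have hT : (T (r + 2) (s + 1) : ℤ) = T (r + 1) (s + 1) + T r s + 1 := by
        exact_mod_cast h2 (r + 2) (s + 1) (by omega) (by omega)
      have hres : cbsResidual (r + 2) (s + 1) = 1 := rfl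
      simp only [coeff₂_X_one_mul_succ, hF, hT, hres]
      ring

theorem mul_eq_of_coeff₂_eq_cbsResidual (G : MvPowerSeries (Fin 2) ℤ)
    (hG : ∀ r s, coeff₂ r s G = cbsResidual r s) :
    (1 - X 0) * ((1 - X 1) * G) = 1 - X 0 + 2 * X 0 * X 1 - X 0 ^ 2 * X 1 := by
  have hL : (1 - X 0) * ((1 - X 1) * G) = G - X 0 * G - X 1 * G + X 0 * (X 1 * G) := by ring
  have hR : (1 - X 0 + 2 * X 0 * X 1 - X 0 ^ 2 * X 1 : MvPowerSeries (Fin 2) ℤ)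
      = 1 - X 0 * 1 + X 0 * (X 1 * 1) + X 0 * (X 1 * 1) - X 0 * (X 0 * (X 1 * 1)) := by ring
  rw [hL, hR]
  refine ext₂ fun r s => ?_
  rcases r with _ | _ | _ | r <;> rcases s with _ | _ | s <;>
    simp only [map_sub, map_add, coeff₂_X_zero_mul_succ, coeff₂_zero_X_zero_mul,
      coeff₂_X_one_mul_succ, coeff₂_X_one_mul_zero, coeff₂_one, hG] <;>
    simp [cbsResidual]

/-- The generating function `F(X,Y) = Σ T(r,s) X^r Y^s` of the CBS recurrence satisfies
`(1 - X)(1 - Y)(1 - X - X²Y) · F = 1 - X + 2XY - X²Y` in `ℤ⟦X,Y⟧`. -/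
theorem cbs_generating_function (T : ℕ → ℕ → ℕ)
    (h0 : ∀ r s : ℕ, r = 0 ∨ s = 0 → T r s = 1)
    (h1 : ∀ s : ℕ, 1 ≤ s → T 1 s = 3)
    (h2 : ∀ r s : ℕ, 2 ≤ r → 1 ≤ s → T r s = T (r - 1) s + T (r - 2) (s - 1) + 1)
    (F : MvPowerSeries (Fin 2) ℤ)
    (hF : ∀ r s : ℕ,
      MvPowerSeries.coeff (R := ℤ) (Finsupp.single 0 r + Finsupp.single 1 s) F = (T r s : ℤ)) :
    (1 - X 0) * (1 - X 1) * (1 - X 0 - (X 0) ^ 2 * X 1) * F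
      = 1 - X 0 + 2 * X 0 * X 1 - (X 0) ^ 2 * X 1 := by
  rw [mul_assoc, mul_assoc]
  exact mul_eq_of_coeff₂_eq_cbsResidual _ (coeff₂_cbs_mul T h0 h1 h2 F hF)
end

section
/- Let r and s be real numbers with s > 0 and r > 2s, and set x = (r − 2s)/(r − s) and y = s(r − s)/(r − 2s)². Then (x, y) is a critical point of H(x,y) = (1 − x)(1 − y)(1 − x − x²y) for the direction (r, s): namely, (1 − x)(1 − y)(1 − x − x²y) = 0 and s · x · (1 − y) · (3x²y − 2x(y − 1) − 2) = r · y · (1 − x) · (x²(2y − 1) + x − 1). -/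
/-!
Write `H = (1 - x)(1 - y) K` with `K = 1 - x - x²y`. Where `K = 0` the partials of `H` are
those of `K` times `(1 - x)(1 - y)`, so the critical point equation for `H` reduces to the one
for `K`, namely `s x K_x = r y K_y`, which is `x ((r - 2s) x y - s) = 0`. At the given point
`x y = s / (r - 2s)` and `x² y = 1 - x = s / (r - s)`, so both conditions hold.
-/

theorem critical_eq_of_factor_eq_zero {r s x y : ℝ} (hK : 1 - x - x ^ 2 * y = 0)
    (hcrit : (r - 2 * s) * (x * y) = s) :
    s * x * ((1 - y) * (3 * x ^ 2 * y - 2 * x * (y - 1) - 2))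
      = r * y * ((1 - x) * (x ^ 2 * (2 * y - 1) + x - 1)) := by
  linear_combination (r * y * (1 - x) - s * x * (1 - y)) * hK + (1 - x) * (1 - y) * x * hcrit

section CriticalPoint

variable {r s x y : ℝ} (h₁ : r - s ≠ 0) (h₂ : r - 2 * s ≠ 0)
  (hx : x = (r - 2 * s) / (r - s)) (hy : y = s * (r - s) / (r - 2 * s) ^ 2)
include h₁ h₂ hx hy

theorem critical_point_mul_eq : (r - 2 * s) * (x * y) = s := by
  subst hx hy
  field_simp

theorem critical_point_factor_eq_zero : 1 - x - x ^ 2 * y = 0 := by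
  have hxy : x * y = s / (r - 2 * s) := by
    rw [eq_div_iff h₂, mul_comm, critical_point_mul_eq h₁ h₂ hx hy]
  rw [sq, mul_assoc, hxy, hx]
  field_simp
  ring

end CriticalPoint

/-- The point `(x, y) = ((r-2s)/(r-s), s(r-s)/(r-2s)²)` is a critical point of
`H(x,y) = (1-x)(1-y)(1-x-x²y)` for the direction `(r, s)`. -/
theorem critical_point_simple (r s x y : ℝ) (hs : 0 < s) (hr : 2 * s < r)
    (hx : x = (r - 2 * s) / (r - s)) (hy : y = s * (r - s) / (r - 2 * s) ^ 2) :
    (1 - x) * (1 - y) * (1 - x - x ^ 2 * y) = 0 ∧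
      s * x * ((1 - y) * (3 * x ^ 2 * y - 2 * x * (y - 1) - 2))
        = r * y * ((1 - x) * (x ^ 2 * (2 * y - 1) + x - 1)) := by
  have h₁ : r - s ≠ 0 := by linarith
  have h₂ : r - 2 * s ≠ 0 := by linarith
  have hK := critical_point_factor_eq_zero h₁ h₂ hx hy
  exact ⟨by rw [hK, mul_zero],
    critical_eq_of_factor_eq_zero hK (critical_point_mul_eq h₁ h₂ hx hy)⟩
end
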